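/- Cut-approximation monotone improvement implies value convergence: if Q is convex real-valued on a compact convex set X ⊂ ℝⁿ and the cuts ℓ_m are exact at the points where they are generated (ℓ_{m+1}(x*_m) = Q(x*_m)) and underestimate Q everywhere, then along any subsequence where x*_m → x̄, the approximation error max_{k ≤ m} ℓ_k(x*_m) − Q(x*_m) → 0, provided the cut gradients are uniformly bounded. -/

import Mathlib

open Finset Matrix RealInnerProductSpace

/-- Exact cuts with uniformly bounded gradients: along a convergent sequence
of trial points, the cutting-plane approximation error tends to zero. -/
theorem cut_approximation_convergence {n : ℕ}
    (X : Set (EuclideanSpace ℝ (Fin n))) (hXc : IsCompact X) (hXconv : Convex ℝ X)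
    (Q : EuclideanSpace ℝ (Fin n) → ℝ)
    (hQconv : ConvexOn ℝ X Q) (hQcont : ContinuousOn Q X)
    (g : ℕ → EuclideanSpace ℝ (Fin n)) (b : ℕ → ℝ) (L : ℝ)
    (hL : ∀ m, ‖g m‖ ≤ L)
    (hcut : ∀ m, ∀ x ∈ X, (inner ℝ (g m) x : ℝ) + b m ≤ Q x)
    (xs : ℕ → EuclideanSpace ℝ (Fin n)) (hxs : ∀ m, xs m ∈ X)
    (hexact : ∀ m, (inner ℝ (g (m + 1)) (xs m) : ℝ) + b (m + 1) = Q (xs m))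
    (xbar : EuclideanSpace ℝ (Fin n))
    (hconv : Filter.Tendsto xs Filter.atTop (nhds xbar)) :
    Filter.Tendsto
      (fun m => Q (xs m) -
        (Finset.range (m + 1)).sup' (by simp) fun k => (inner ℝ (g k) (xs m) : ℝ) + b k)
      Filter.atTop (nhds 0) := by
  have hL0 : 0 ≤ L := (norm_nonneg _).trans (hL 0)
  have hxbar : xbar ∈ X :=
    hXc.isClosed.mem_of_tendsto hconv (Filter.Eventually.of_forall hxs)
  have hxsW : Filter.Tendsto xs Filter.atTop (nhdsWithin xbar X) :=
    tendsto_nhdsWithin_iff.mpr ⟨hconv, Filter.Eventually.of_forall hxs⟩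
  have hQt : Filter.Tendsto (fun m => Q (xs m)) Filter.atTop (nhds (Q xbar)) :=
    ((hQcont xbar hxbar).tendsto).comp hxsW
  have hprevN : Filter.Tendsto (fun m : ℕ => m - 1) Filter.atTop Filter.atTop :=
    Filter.tendsto_sub_atTop_nat 1
  have hQp : Filter.Tendsto (fun m => Q (xs (m - 1))) Filter.atTop (nhds (Q xbar)) :=
    hQt.comp hprevN
  have hxp : Filter.Tendsto (fun m => xs (m - 1)) Filter.atTop (nhds xbar) :=
    hconv.comp hprevN
  have hnorm : Filter.Tendsto (fun m => ‖xs m - xs (m - 1)‖) Filter.atTop (nhds 0) := by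
    have := (hconv.sub hxp).norm
    simpa using this
  have hf : Filter.Tendsto
      (fun m => Q (xs m) - Q (xs (m - 1)) + L * ‖xs m - xs (m - 1)‖)
      Filter.atTop (nhds 0) := by
    have := (hQt.sub hQp).add (hnorm.const_mul L)
    simpa using this
  refine tendsto_of_tendsto_of_tendsto_of_le_of_le' tendsto_const_nhds hf ?_ ?_
  · filter_upwards with m
    have hsup : ((Finset.range (m + 1)).sup' (by simp)
        fun k => (inner ℝ (g k) (xs m) : ℝ) + b k) ≤ Q (xs m) :=
      Finset.sup'_le _ _ fun k _ => hcut k _ (hxs m)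
    linarith
  · filter_upwards [Filter.eventually_ge_atTop 1] with m hm
    have hle : (inner ℝ (g m) (xs m) : ℝ) + b m ≤
        (Finset.range (m + 1)).sup' (by simp)
          fun k => (inner ℝ (g k) (xs m) : ℝ) + b k :=
      Finset.le_sup' (fun k => (inner ℝ (g k) (xs m) : ℝ) + b k) (Finset.self_mem_range_succ m)
    have hex : (inner ℝ (g m) (xs (m - 1)) : ℝ) + b m = Q (xs (m - 1)) := by
      have h := hexact (m - 1)
      rwa [Nat.sub_add_cancel hm] at h
    have hsub : (inner ℝ (g m) (xs m - xs (m - 1)) : ℝ)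
        = inner ℝ (g m) (xs m) - inner ℝ (g m) (xs (m - 1)) := inner_sub_right _ _ _
    have hcs : |(inner ℝ (g m) (xs m - xs (m - 1)) : ℝ)| ≤ L * ‖xs m - xs (m - 1)‖ :=
      (abs_real_inner_le_norm _ _).trans
        (mul_le_mul_of_nonneg_right (hL m) (norm_nonneg _))
    have hneg := neg_abs_le ((inner ℝ (g m) (xs m - xs (m - 1)) : ℝ))
    linarith
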